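/- In the setting where delta(J) = dim(gamma + sum_{j in J} kappa_j) - |J| for polytopes gamma, kappa_1,...,kappa_{k-1}: if min over all J of delta(J) equals 1, then the set {J : delta(J) = 1} has a unique maximal element (with respect to inclusion). -/

import Mathlib

/-!
The direction of the affine span of a Minkowski sum of nonempty sets is the sum of the
directions, so `dim (γ + ∑_{j ∈ J} κ_j)` is the rank of `G ⊔ ⨆_{j ∈ J} K_j`, where `G`, `K_j` are
the (finite-dimensional) directions of `γ`, `κ_j`. Rank is submodular on such sums and `|J|` is
modular, so `δ` is submodular. If `δ ≥ 1` everywhere, submodularity forces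
`δ (I ∪ J) = 1` whenever `δ I = δ J = 1`; the union of all sets with `δ = 1` is then the
greatest one.
-/

open scoped Pointwise

/-- A polytope: the convex hull of a nonempty finite set of points. -/
def IsPolytope {V : Type*} [AddCommGroup V] [Module ℝ V] (P : Set V) : Prop :=
  ∃ s : Finset V, s.Nonempty ∧ P = convexHull ℝ (s : Set V)

/-- The dimension of (the affine span of) a subset of a real vector space. -/
noncomputable def polyDim {V : Type*} [AddCommGroup V] [Module ℝ V] (P : Set V) : ℕ :=
  Module.finrank ℝ (affineSpan ℝ P).direction

/-- `δ(J) = dim(γ + ∑_{j ∈ J} κ_j) - |J|`. -/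
noncomputable def deltaFn {V : Type*} [AddCommGroup V] [Module ℝ V] {m : ℕ}
    (γ : Set V) (κ : Fin m → Set V) (J : Finset (Fin m)) : ℤ :=
  (polyDim (γ + ∑ j ∈ J, κ j) : ℤ) - J.card

theorem Set.finsetSum_nonempty {ι M : Type*} [AddCommMonoid M] {κ : ι → Set M} {J : Finset ι}
    (hκ : ∀ j ∈ J, (κ j).Nonempty) : (∑ j ∈ J, κ j).Nonempty :=
  Finset.sum_induction κ Set.Nonempty (fun _ _ => .add) Set.zero_nonempty hκ

section MinkowskiSum

variable {R V : Type*} [Ring R] [AddCommGroup V] [Module R V]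

theorem vectorSpan_add_eq_sup {A B : Set V} (hA : A.Nonempty) (hB : B.Nonempty) :
    vectorSpan R (A + B) = vectorSpan R A ⊔ vectorSpan R B := by
  obtain ⟨a, ha⟩ := hA
  obtain ⟨b, hb⟩ := hB
  refine le_antisymm ?_ (sup_le ?_ ?_)
  · rw [vectorSpan_def, Submodule.span_le]
    rintro _ ⟨_, ⟨a₁, ha₁, b₁, hb₁, rfl⟩, _, ⟨a₂, ha₂, b₂, hb₂, rfl⟩, rfl⟩
    dsimp only
    rw [vsub_eq_sub, add_sub_add_comm]
    exact Submodule.add_mem_sup (vsub_mem_vectorSpan R ha₁ ha₂) (vsub_mem_vectorSpan R hb₁ hb₂)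
  · rw [← vectorSpan_vadd R A b, add_comm A]
    exact vectorSpan_mono R (Set.vadd_set_subset_add hb)
  · rw [← vectorSpan_vadd R B a]
    exact vectorSpan_mono R (Set.vadd_set_subset_add ha)

theorem vectorSpan_finsetSum {ι : Type*} (κ : ι → Set V) (J : Finset ι)
    (hκ : ∀ j ∈ J, (κ j).Nonempty) :
    vectorSpan R (∑ j ∈ J, κ j) = J.sup fun j => vectorSpan R (κ j) := by
  classical
  induction J using Finset.induction with
  | empty => exact vectorSpan_singleton R (0 : V)
  | insert j J hj ih =>
    have hJ : ∀ i ∈ J, (κ i).Nonempty := fun i hi => hκ i (Finset.mem_insert_of_mem hi)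
    rw [Finset.sum_insert hj, Finset.sup_insert,
      vectorSpan_add_eq_sup (hκ j (Finset.mem_insert_self j J)) (Set.finsetSum_nonempty hJ), ih hJ]

end MinkowskiSum

theorem Submodule.finrank_add_finrank_sup_le_of_le_inf {K V : Type*} [DivisionRing K]
    [AddCommGroup V] [Module K V] {S U W : Submodule K V} [FiniteDimensional K U]
    [FiniteDimensional K W] (h : S ≤ U ⊓ W) :
    Module.finrank K S + Module.finrank K ↑(U ⊔ W) ≤ Module.finrank K U + Module.finrank K W := by
  rw [← Submodule.finrank_sup_add_finrank_inf_eq U W, add_comm]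
  gcongr
  exact Submodule.finrank_mono h

theorem Submodule.finrank_sup_finsetSup_inter_add_union_le {K V ι : Type*} [DivisionRing K]
    [AddCommGroup V] [Module K V] [DecidableEq ι] (G : Submodule K V) (f : ι → Submodule K V)
    [FiniteDimensional K G] [∀ i, FiniteDimensional K (f i)] (I J : Finset ι) :
    Module.finrank K ↑(G ⊔ (I ∩ J).sup f) + Module.finrank K ↑(G ⊔ (I ∪ J).sup f) ≤
      Module.finrank K ↑(G ⊔ I.sup f) + Module.finrank K ↑(G ⊔ J.sup f) := by
  have hunion : G ⊔ (I ∪ J).sup f = (G ⊔ I.sup f) ⊔ (G ⊔ J.sup f) := by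
    rw [Finset.sup_union, sup_sup_sup_comm, sup_idem]
  rw [hunion]
  exact finrank_add_finrank_sup_le_of_le_inf <| le_inf
    (sup_le_sup_left (Finset.sup_mono Finset.inter_subset_left) _)
    (sup_le_sup_left (Finset.sup_mono Finset.inter_subset_right) _)

section Polytope

variable {V : Type*} [AddCommGroup V] [Module ℝ V]

theorem IsPolytope.nonempty {P : Set V} (h : IsPolytope P) : P.Nonempty := by
  obtain ⟨s, hs, rfl⟩ := h
  exact hs.to_set.mono (subset_convexHull ℝ _)

theorem IsPolytope.finiteDimensional_vectorSpan {P : Set V} (h : IsPolytope P) :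
    FiniteDimensional ℝ (vectorSpan ℝ P) := by
  obtain ⟨s, -, rfl⟩ := h
  rw [← direction_affineSpan, affineSpan_convexHull, direction_affineSpan]
  exact finiteDimensional_vectorSpan_of_finite ℝ s.finite_toSet

theorem deltaFn_inter_add_union_le {m : ℕ} {γ : Set V} {κ : Fin m → Set V} (hγ : IsPolytope γ)
    (hκ : ∀ j, IsPolytope (κ j)) (I J : Finset (Fin m)) :
    deltaFn γ κ (I ∩ J) + deltaFn γ κ (I ∪ J) ≤ deltaFn γ κ I + deltaFn γ κ J := by
  have := hγ.finiteDimensional_vectorSpan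
  have := fun j => (hκ j).finiteDimensional_vectorSpan
  have hdim : ∀ K : Finset (Fin m), polyDim (γ + ∑ j ∈ K, κ j) =
      Module.finrank ℝ ↑(vectorSpan ℝ γ ⊔ K.sup fun j => vectorSpan ℝ (κ j)) := fun K => by
    have hκK : ∀ j ∈ K, (κ j).Nonempty := fun j _ => (hκ j).nonempty
    rw [polyDim, direction_affineSpan,
      vectorSpan_add_eq_sup hγ.nonempty (Set.finsetSum_nonempty hκK), vectorSpan_finsetSum κ K hκK]
  have hrank := Submodule.finrank_sup_finsetSup_inter_add_union_le (vectorSpan ℝ γ)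
    (fun j => vectorSpan ℝ (κ j)) I J
  have hcard : ((I ∪ J).card : ℤ) + (I ∩ J).card = I.card + J.card := by
    exact_mod_cast Finset.card_union_add_card_inter I J
  simp only [deltaFn, hdim]
  omega

end Polytope

theorem supClosed_setOf_eq_of_submodular {α β : Type*} [Lattice α] [AddCommMonoid β]
    [PartialOrder β] [IsOrderedCancelAddMonoid β] {f : α → β} {c : β}
    (hf : ∀ a b, f (a ⊓ b) + f (a ⊔ b) ≤ f a + f b) (hc : ∀ a, c ≤ f a) :
    SupClosed {a | f a = c} := by
  intro a ha b hb
  refine le_antisymm ?_ (hc _)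
  have := hf a b
  rw [ha, hb] at this
  exact le_of_add_le_add_left ((add_le_add_left (hc _) _).trans this)

theorem SupClosed.exists_isGreatest {α : Type*} [SemilatticeSup α] {s : Set α}
    (hs : SupClosed s) (hfin : s.Finite) (hne : s.Nonempty) : ∃ a, IsGreatest s a := by
  have hne' : hfin.toFinset.Nonempty := hfin.toFinset_nonempty.mpr hne
  refine ⟨hfin.toFinset.sup' hne' id, ?_, fun b hb => ?_⟩
  · exact hs.finsetSup'_mem hne' fun b hb => hfin.mem_toFinset.mp hb
  · exact Finset.le_sup' id (hfin.mem_toFinset.mpr hb)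

/-- If `min_J δ(J) = 1`, then `{J : δ(J) = 1}` has a unique maximal
element with respect to inclusion (which is in fact a greatest element). -/
theorem delta_one_unique_maximal {V : Type*} [AddCommGroup V] [Module ℝ V]
    (k : ℕ) (γ : Set V) (κ : Fin (k - 1) → Set V)
    (hγ : IsPolytope γ) (hκ : ∀ j, IsPolytope (κ j))
    (h1 : ∀ J : Finset (Fin (k - 1)), 1 ≤ deltaFn γ κ J)
    (h2 : ∃ J : Finset (Fin (k - 1)), deltaFn γ κ J = 1) :
    ∃! J₁ : Finset (Fin (k - 1)), deltaFn γ κ J₁ = 1 ∧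
      ∀ J, deltaFn γ κ J = 1 → J ⊆ J₁ := by
  have hclosed : SupClosed {J | deltaFn γ κ J = 1} :=
    supClosed_setOf_eq_of_submodular (deltaFn_inter_add_union_le hγ hκ) h1
  obtain ⟨J₁, hJ₁⟩ := hclosed.exists_isGreatest (Set.toFinite _) h2
  exact ⟨J₁, hJ₁, fun J hJ => IsGreatest.unique (s := {J | deltaFn γ κ J = 1}) hJ hJ₁⟩
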